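/- Let k be a field, v : k → ℝ≥0 a nonarchimedean absolute value, R a commutative k-algebra, R^• the multiplicative monoid underlying R, and φ̂ : k[R^•] → R the canonical surjective k-algebra homomorphism sending the basis element of a ∈ R^• to a. Then the map sending a nonarchimedean seminorm w : R → ℝ≥0 extending v (i.e., w(c·1_R) = v(c) for all c ∈ k) to the 𝕋-algebra homomorphism g : Bend^GG_{v,φ̂}(R) → 𝕋 with g([a]) = w(a) for a ∈ R^• is well defined and is a homeomorphism from the Berkovich analytification X^an onto the set of 𝕋-algebra homomorphisms Bend^GG_{v,φ̂}(R) → 𝕋, where X^an carries the topology of pointwise convergence induced from ℝ≥0^R and the homomorphism set carries the topology of pointwise convergence. -/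

import Mathlib

open scoped NNReal

/-- The tropical semifield `𝕋`: underlying set `ℝ≥0`, addition `max`, usual
multiplication. -/
def Trop : Type := ℝ≥0

/-- Identification `ℝ≥0 → 𝕋`. -/
def toTrop : ℝ≥0 → Trop := id

/-- Identification `𝕋 → ℝ≥0`. -/
def ofTrop : Trop → ℝ≥0 := id

instance : Zero Trop := ⟨toTrop 0⟩
instance : One Trop := ⟨toTrop 1⟩
noncomputable instance : Add Trop := ⟨fun a b => toTrop (max (ofTrop a) (ofTrop b))⟩
noncomputable instance : Mul Trop := ⟨fun a b => toTrop (ofTrop a * ofTrop b)⟩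

noncomputable instance : CommSemiring Trop where
  add := (· + ·)
  zero := 0
  mul := (· * ·)
  one := 1
  nsmul := nsmulRec
  add_assoc a b c := max_assoc (ofTrop a) (ofTrop b) (ofTrop c)
  add_comm a b := max_comm (ofTrop a) (ofTrop b)
  zero_add a := max_eq_right (show 0 ≤ ofTrop a from zero_le)
  add_zero a := max_eq_left (show 0 ≤ ofTrop a from zero_le)
  mul_assoc a b c := mul_assoc (ofTrop a) (ofTrop b) (ofTrop c)
  one_mul a := one_mul (ofTrop a)
  mul_one a := mul_one (ofTrop a)
  mul_comm a b := mul_comm (ofTrop a) (ofTrop b)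
  zero_mul a := zero_mul (ofTrop a)
  mul_zero a := mul_zero (ofTrop a)
  left_distrib a b c := by
    show ofTrop a * max (ofTrop b) (ofTrop c)
        = max (ofTrop a * ofTrop b) (ofTrop a * ofTrop c)
    rcases le_total (ofTrop b) (ofTrop c) with h | h
    · rw [max_eq_right h, max_eq_right (mul_le_mul_right h _)]
    · rw [max_eq_left h, max_eq_left (mul_le_mul_right h _)]
  right_distrib a b c := by
    show max (ofTrop a) (ofTrop b) * ofTrop c
        = max (ofTrop a * ofTrop c) (ofTrop b * ofTrop c)
    rcases le_total (ofTrop a) (ofTrop b) with h | h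
    · rw [max_eq_right h, max_eq_right (mul_le_mul_left h _)]
    · rw [max_eq_left h, max_eq_left (mul_le_mul_left h _)]

/-- The Euclidean topology on `𝕋 = ℝ≥0`. -/
noncomputable instance : TopologicalSpace Trop :=
  inferInstanceAs (TopologicalSpace ℝ≥0)

section
variable {k A R : Type*} [Field k] [CommMonoid A] [CommRing R] [Algebra k R]

/-- `p^trop ∈ 𝕋[A]`: coefficientwise application of `v` to `p ∈ k[A]`. -/
noncomputable def ptrop (v : k → ℝ≥0) (hv0 : v 0 = 0) (p : MonoidAlgebra k A) :
    MonoidAlgebra Trop A :=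
  MonoidAlgebra.ofCoeff (Finsupp.mapRange (fun c => toTrop (v c))
    (by show toTrop (v 0) = 0; rw [hv0]; rfl) p.coeff)

/-- The bend congruence `bend_{v,φ}`: the smallest semiring congruence on
`𝕋[A]` containing, for every `p ∈ ker φ` and every `a ∈ supp p`, the pair
`(p^trop, p^trop with its a-term removed)`.  The quotient
`(bendCon v hv0 φ).Quotient` is the Giansiracusa bend `Bend^GG_{v,φ}(R)`,
a `𝕋`-algebra via `t ↦ ⟦t·1⟧`. -/
noncomputable def bendCon (v : k → ℝ≥0) (hv0 : v 0 = 0)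
    (φ : MonoidAlgebra k A →ₐ[k] R) : RingCon (MonoidAlgebra Trop A) :=
  ringConGen (fun x y => ∃ p : MonoidAlgebra k A, φ p = 0 ∧
    ∃ a ∈ p.coeff.support, x = ptrop v hv0 p ∧ y = (ptrop v hv0 p).erase a)

/-- The set of `𝕋`-algebra homomorphisms from the Giansiracusa bend
`Bend^GG_{v,φ}(R) = 𝕋[A]/bend_{v,φ}` to `𝕋`, as a subtype of the function
space (carrying the topology of pointwise convergence). -/
abbrev TAlgHoms (v : k → ℝ≥0) (hv0 : v 0 = 0) (φ : MonoidAlgebra k A →ₐ[k] R) :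
    Type _ :=
  {g : (bendCon v hv0 φ).Quotient → Trop //
    (∀ x y, g (x + y) = g x + g y) ∧ (∀ x y, g (x * y) = g x * g y) ∧
    g 0 = 0 ∧ g 1 = 1 ∧
    ∀ t : Trop,
      g ((bendCon v hv0 φ).mk' (MonoidAlgebra.singleOneRingHom t)) = t}

/-- The Berkovich analytification `X^an`: the set of nonarchimedean
seminorms `w : R → ℝ≥0` extending `v`, as a subtype of `ℝ≥0^R` with the
topology of pointwise convergence. -/
abbrev XAn (v : k → ℝ≥0) (R : Type*) [CommRing R] [Algebra k R] : Type _ :=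
  {w : R → ℝ≥0 //
    w 0 = 0 ∧ w 1 = 1 ∧ (∀ a b : R, w (a * b) = w a * w b) ∧
    (∀ a b : R, w (a + b) ≤ max (w a) (w b)) ∧
    ∀ c : k, w (algebraMap k R c) = v c}

section AuxLemmas

@[simp] lemma ofTrop_toTrop (x : ℝ≥0) : ofTrop (toTrop x) = x := rfl
@[simp] lemma toTrop_ofTrop (x : Trop) : toTrop (ofTrop x) = x := rfl
@[simp] lemma ofTrop_mul (x y : Trop) : ofTrop (x * y) = ofTrop x * ofTrop y := rfl
@[simp] lemma ofTrop_add (x y : Trop) : ofTrop (x + y) = max (ofTrop x) (ofTrop y) := rfl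
@[simp] lemma ofTrop_zero : ofTrop 0 = 0 := rfl
@[simp] lemma ofTrop_one : ofTrop 1 = 1 := rfl

lemma ofTrop_inj {x y : Trop} (h : ofTrop x = ofTrop y) : x = y := h

lemma nnreal_sq_eq_one {x : ℝ≥0} (h : x * x = 1) : x = 1 := by
  rcases le_total x 1 with h1 | h1
  · refine le_antisymm h1 ?_
    calc (1 : ℝ≥0) = x * x := h.symm
    _ ≤ 1 * x := mul_le_mul_left h1 x
    _ = x := one_mul x
  · refine le_antisymm ?_ h1
    calc x = x * 1 := (mul_one x).symm
    _ ≤ x * x := mul_le_mul_right h1 x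
    _ = 1 := h

variable {k R : Type*} [Field k] [CommRing R] [Algebra k R] {v : k → ℝ≥0}

lemma v_neg (hv1 : v 1 = 1) (hvmul : ∀ a b : k, v (a * b) = v a * v b) (c : k) :
    v (-c) = v c := by
  have h1 : v (-1) = 1 := nnreal_sq_eq_one (by rw [← hvmul, neg_one_mul, neg_neg, hv1])
  calc v (-c) = v ((-1) * c) := by rw [neg_one_mul]
  _ = v c := by rw [hvmul, h1, one_mul]

lemma wAn_neg (w : XAn v R) (a : R) : w.1 (-a) = w.1 a := by
  have h1 : w.1 (-1) = 1 :=
    nnreal_sq_eq_one (by rw [← w.2.2.2.1, neg_one_mul, neg_neg, w.2.2.1])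
  calc w.1 (-a) = w.1 ((-1) * a) := by rw [neg_one_mul]
  _ = w.1 a := by rw [w.2.2.2.1, h1, one_mul]

lemma wAn_sum_le (w : XAn v R) {ι : Type*} (s : Finset ι) (f : ι → R) :
    w.1 (∑ b ∈ s, f b) ≤ s.sup fun b => w.1 (f b) := by
  classical
  induction s using Finset.cons_induction with
  | empty => simp [w.2.1]
  | cons a s ha ih =>
      rw [Finset.sum_cons, Finset.sup_cons]
      exact le_trans (w.2.2.2.2.1 _ _) (max_le_max le_rfl ih)

/-- The multiplicative evaluation monoid hom attached to a seminorm. -/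
noncomputable def uHom (w : XAn v R) : R →* Trop where
  toFun a := toTrop (w.1 a)
  map_one' := w.2.2.1
  map_mul' a b := w.2.2.2.1 a b

@[simp] lemma uHom_apply (w : XAn v R) (a : R) : uHom w a = toTrop (w.1 a) := rfl

/-- Evaluation of a tropical polynomial along a multiplicative map `R →* 𝕋`. -/
noncomputable def evalT (u : R →* Trop) : MonoidAlgebra Trop R →+* Trop :=
  MonoidAlgebra.liftNCRingHom (RingHom.id Trop) u fun x y => Commute.all _ _

lemma evalT_single (u : R →* Trop) (a : R) (c : Trop) :
    evalT u (MonoidAlgebra.single a c) = c * u a :=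
  MonoidAlgebra.liftNC_single _ _ _ _

lemma evalT_sup (u : R →* Trop) (q : MonoidAlgebra Trop R) :
    ofTrop (evalT u q) = q.coeff.support.sup fun a => ofTrop (q.coeff a) * ofTrop (u a) := by
  classical
  induction q using MonoidAlgebra.induction with
  | zero => simp
  | single_add a b f haf hb ih =>
      have hsupp : (MonoidAlgebra.single a b + f).coeff.support = insert a f.coeff.support := by
        rw [MonoidAlgebra.coeff_add, MonoidAlgebra.coeff_single, Finsupp.support_add_eq,
          Finsupp.support_single_ne_zero _ hb, ← Finset.insert_eq]
        rw [Finsupp.support_single_ne_zero _ hb]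
        exact Finset.disjoint_singleton_left.mpr haf
      have hco : ∀ x ∈ f.coeff.support,
          ofTrop ((MonoidAlgebra.single a b + f).coeff x) * ofTrop (u x)
            = ofTrop (f.coeff x) * ofTrop (u x) := by
        intro x hx
        have hxa : a ≠ x := fun h => haf (h ▸ hx)
        rw [MonoidAlgebra.coeff_add, MonoidAlgebra.coeff_single, Finsupp.add_apply,
          Finsupp.single_eq_of_ne' hxa, zero_add]
      have hat : (MonoidAlgebra.single a b + f).coeff a = b := by
        rw [MonoidAlgebra.coeff_add, MonoidAlgebra.coeff_single, Finsupp.add_apply,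
          Finsupp.single_eq_same, Finsupp.notMem_support_iff.1 haf, add_zero]
      rw [map_add, evalT_single, hsupp, Finset.sup_insert, Finset.sup_congr rfl hco, ← ih, hat]
      rfl

end AuxLemmas

section AuxCon

variable {k R : Type*} [Field k] [CommRing R] [Algebra k R] {v : k → ℝ≥0}

/-- The kernel congruence of a ring hom. -/
def kerRC {α β : Type*} [NonAssocSemiring α] [NonAssocSemiring β] (f : α →+* β) :
    RingCon α where
  r x y := f x = f y
  iseqv := ⟨fun _ => rfl, Eq.symm, Eq.trans⟩
  mul' {a b c d} h1 h2 := by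
    have h1' : f a = f b := h1
    have h2' : f c = f d := h2
    show f (a * c) = f (b * d)
    rw [map_mul, map_mul, h1', h2']
  add' {a b c d} h1 h2 := by
    have h1' : f a = f b := h1
    have h2' : f c = f d := h2
    show f (a + c) = f (b + d)
    rw [map_add, map_add, h1', h2']

lemma ptrop_support (hv0 : v 0 = 0) (hvabs : ∀ c : k, v c = 0 ↔ c = 0)
    (p : MonoidAlgebra k R) : (ptrop v hv0 p).coeff.support = p.coeff.support := by
  ext b
  simp only [Finsupp.mem_support_iff, ptrop, MonoidAlgebra.coeff_ofCoeff, Finsupp.mapRange_apply]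
  constructor
  · intro h hc
    exact h (show toTrop (v (p.coeff b)) = 0 by rw [hc, hv0]; rfl)
  · intro h hc
    exact h ((hvabs (p.coeff b)).1 hc)

@[simp] lemma ptrop_apply (hv0 : v 0 = 0) (p : MonoidAlgebra k R) (b : R) :
    (ptrop v hv0 p).coeff b = toTrop (v (p.coeff b)) := rfl

lemma bend_rel {hv0 : v 0 = 0} (φ : MonoidAlgebra k R →ₐ[k] R)
    {p : MonoidAlgebra k R} (hp : φ p = 0) {a : R} (ha : a ∈ p.coeff.support) :
    (bendCon v hv0 φ) (ptrop v hv0 p) ((ptrop v hv0 p).erase a) := by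
  show RingConGen.Rel _ _ _
  exact RingConGen.Rel.of _ _ ⟨p, hp, a, ha, rfl, rfl⟩

/-- `evalT (uHom w)` respects the bend congruence. -/
lemma evalT_bend (hv0 : v 0 = 0) (hvabs : ∀ c : k, v c = 0 ↔ c = 0) (w : XAn v R)
    {p : MonoidAlgebra k R}
    (hp : (MonoidAlgebra.lift k R R (MonoidHom.id R)) p = 0) {a : R}
    (ha : a ∈ p.coeff.support) :
    evalT (uHom w) (ptrop v hv0 p) = evalT (uHom w) ((ptrop v hv0 p).erase a) := by
  classical
  apply ofTrop_inj
  rw [evalT_sup, evalT_sup, ptrop_support hv0 hvabs, MonoidAlgebra.coeff_erase,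
    Finsupp.support_erase, ptrop_support hv0 hvabs]
  have hcongr : ∀ x ∈ p.coeff.support.erase a,
      ofTrop ((ptrop v hv0 p).coeff.erase a x) * ofTrop (uHom w x)
        = ofTrop ((ptrop v hv0 p).coeff x) * ofTrop (uHom w x) := by
    intro x hx
    rw [Finsupp.erase_ne (Finset.mem_erase.1 hx).1]
  rw [Finset.sup_congr rfl hcongr]
  have hsum : ∑ b ∈ p.coeff.support, p.coeff b • b = (0 : R) := by
    have h := hp
    rw [MonoidAlgebra.lift_apply] at h
    simpa [Finsupp.sum] using h
  have h2 : (p.coeff a) • a = - ∑ b ∈ p.coeff.support.erase a, p.coeff b • b := by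
    have h := Finset.sum_erase_add p.coeff.support (fun b => p.coeff b • b) ha
    rw [hsum] at h
    exact eq_neg_of_add_eq_zero_right h
  have hfa : v (p.coeff a) * w.1 a ≤ (p.coeff.support.erase a).sup
      fun b => ofTrop ((ptrop v hv0 p).coeff b) * ofTrop (uHom w b) := by
    have : v (p.coeff a) * w.1 a = w.1 ((p.coeff a) • a) := by
      rw [Algebra.smul_def, w.2.2.2.1, w.2.2.2.2.2]
    rw [this, h2, wAn_neg]
    refine le_trans (wAn_sum_le w _ _) (le_of_eq (Finset.sup_congr rfl ?_))
    intro b _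
    rw [Algebra.smul_def, w.2.2.2.1, w.2.2.2.2.2]
    rfl
  conv_lhs => rw [← Finset.insert_erase ha, Finset.sup_insert]
  exact sup_eq_right.2 hfa

end AuxCon

set_option linter.unusedSectionVars false

section AuxBack

variable {k R : Type*} [Field k] [CommRing R] [Algebra k R] {v : k → ℝ≥0}
  {hv0 : v 0 = 0} {φ : MonoidAlgebra k R →ₐ[k] R}

/-- The monoid hom `R →* 𝕋` attached to a `𝕋`-algebra hom on the bend. -/
noncomputable def ghomOf (g : TAlgHoms v hv0 φ) : R →* Trop where
  toFun a := g.1 ((bendCon v hv0 φ).mk' (MonoidAlgebra.of Trop R a))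
  map_one' := by
    show g.1 ((bendCon v hv0 φ).mk' (MonoidAlgebra.of Trop R 1)) = 1
    rw [map_one, map_one]
    exact g.2.2.2.2.1
  map_mul' a b := by
    show g.1 ((bendCon v hv0 φ).mk' (MonoidAlgebra.of Trop R (a * b)))
      = g.1 ((bendCon v hv0 φ).mk' (MonoidAlgebra.of Trop R a))
        * g.1 ((bendCon v hv0 φ).mk' (MonoidAlgebra.of Trop R b))
    rw [map_mul, map_mul]
    exact g.2.2.1 _ _

@[simp] lemma ghomOf_apply (g : TAlgHoms v hv0 φ) (a : R) :
    ghomOf g a = g.1 ((bendCon v hv0 φ).mk' (MonoidAlgebra.of Trop R a)) := rfl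

lemma g_single (g : TAlgHoms v hv0 φ) (a : R) (c : Trop) :
    g.1 ((bendCon v hv0 φ).mk' (MonoidAlgebra.single a c)) = c * ghomOf g a := by
  have h : (MonoidAlgebra.single a c : MonoidAlgebra Trop R)
      = MonoidAlgebra.singleOneRingHom c * MonoidAlgebra.of Trop R a := by
    rw [MonoidAlgebra.singleOneRingHom_apply]
    show MonoidAlgebra.single a c = MonoidAlgebra.single 1 c * MonoidAlgebra.single a 1
    rw [MonoidAlgebra.single_mul_single, one_mul, mul_one]
  rw [h, map_mul, g.2.2.1, g.2.2.2.2.2]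
  rfl

lemma geval (g : TAlgHoms v hv0 φ) (q : MonoidAlgebra Trop R) :
    g.1 ((bendCon v hv0 φ).mk' q) = evalT (ghomOf g) q := by
  induction q using MonoidAlgebra.induction with
  | zero =>
      rw [map_zero, map_zero]
      exact g.2.2.2.1
  | single_add a b f haf hb ih =>
      rw [map_add, map_add, g.2.1, ih, g_single, evalT_single]

/-- Main inequality extracted from a single bend relation. -/
lemma bend_ineq [DecidableEq R] (hvabs : ∀ c : k, v c = 0 ↔ c = 0) (g : TAlgHoms v hv0 φ)
    {p : MonoidAlgebra k R} (hp : φ p = 0) {a : R} (ha : a ∈ p.coeff.support) :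
    v (p.coeff a) * ofTrop (ghomOf g a)
      ≤ (p.coeff.support.erase a).sup fun b => v (p.coeff b) * ofTrop (ghomOf g b) := by
  classical
  have hrel := bend_rel (v := v) (hv0 := hv0) φ hp ha
  have heq : g.1 ((bendCon v hv0 φ).mk' (ptrop v hv0 p))
      = g.1 ((bendCon v hv0 φ).mk' ((ptrop v hv0 p).erase a)) :=
    congrArg g.1 ((bendCon v hv0 φ).eq.2 hrel)
  rw [geval, geval] at heq
  have heq2 := congrArg ofTrop heq
  rw [evalT_sup, evalT_sup, ptrop_support hv0 hvabs, MonoidAlgebra.coeff_erase,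
    Finsupp.support_erase, ptrop_support hv0 hvabs] at heq2
  have hcongr : ∀ x ∈ p.coeff.support.erase a,
      ofTrop ((ptrop v hv0 p).coeff.erase a x) * ofTrop (ghomOf g x)
        = v (p.coeff x) * ofTrop (ghomOf g x) := by
    intro x hx
    rw [Finsupp.erase_ne (Finset.mem_erase.1 hx).1]
    rfl
  rw [Finset.sup_congr rfl hcongr] at heq2
  conv_lhs at heq2 => rw [← Finset.insert_erase ha, Finset.sup_insert]
  have hcongr2 : ∀ x ∈ p.coeff.support.erase a,
      ofTrop ((ptrop v hv0 p).coeff x) * ofTrop (ghomOf g x)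
        = v (p.coeff x) * ofTrop (ghomOf g x) := fun x _ => rfl
  rw [Finset.sup_congr rfl hcongr2] at heq2
  calc v (p.coeff a) * ofTrop (ghomOf g a)
      ≤ v (p.coeff a) * ofTrop (ghomOf g a)
        ⊔ (p.coeff.support.erase a).sup fun b => v (p.coeff b) * ofTrop (ghomOf g b) := le_sup_left
  _ = _ := heq2

end AuxBack

section AuxOmega
set_option linter.unusedSectionVars false

variable {k R : Type*} [Field k] [CommRing R] [Algebra k R] {v : k → ℝ≥0}
  {hv0 : v 0 = 0}

/-- The canonical surjection `k[R^•] → R`. -/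
noncomputable abbrev phiR (k R : Type*) [Field k] [CommRing R] [Algebra k R] :
    MonoidAlgebra k R →ₐ[k] R := MonoidAlgebra.lift k R R (MonoidHom.id R)

lemma phiR_single (a : R) (c : k) : phiR k R (MonoidAlgebra.single a c) = c • a := by
  show phiR k R (MonoidAlgebra.single a c) = c • a
  rw [MonoidAlgebra.lift_single]
  rfl

lemma v_single_le (hv0 : v 0 = 0) (hv1 : v 1 = 1) (y x : R) :
    v ((Finsupp.single y (1 : k)) x) ≤ 1 := by
  classical
  rcases eq_or_ne y x with h | h
  · rw [h, Finsupp.single_eq_same, hv1]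
  · rw [Finsupp.single_eq_of_ne' h, hv0]
    exact zero_le

lemma omega_zero (hv1 : v 1 = 1) (hvabs : ∀ c : k, v c = 0 ↔ c = 0)
    (g : TAlgHoms v hv0 (phiR k R)) : ofTrop (ghomOf g 0) = 0 := by
  classical
  set p : MonoidAlgebra k R := MonoidAlgebra.single (0 : R) (1 : k) with hpdef
  have hp : phiR k R p = 0 := by rw [hpdef, phiR_single, one_smul]
  have hmem : (0 : R) ∈ p.coeff.support := by
    rw [Finsupp.mem_support_iff, hpdef, MonoidAlgebra.coeff_single, Finsupp.single_eq_same]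
    exact one_ne_zero
  have hkey := bend_ineq hvabs g hp hmem
  rw [hpdef] at hkey
  rw [MonoidAlgebra.coeff_single, Finsupp.support_single_ne_zero _ one_ne_zero, Finset.erase_singleton,
    Finset.sup_empty, Finsupp.single_eq_same, hv1, one_mul] at hkey
  exact le_antisymm (le_bot_iff.1 hkey ▸ le_rfl) zero_le

lemma omega_one (g : TAlgHoms v hv0 (phiR k R)) : ofTrop (ghomOf g 1) = 1 := by
  rw [map_one]
  rfl

lemma omega_mul (g : TAlgHoms v hv0 (phiR k R)) (a b : R) :
    ofTrop (ghomOf g (a * b)) = ofTrop (ghomOf g a) * ofTrop (ghomOf g b) := by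
  rw [map_mul]
  rfl

lemma omega_add (hv1 : v 1 = 1) (hvmul : ∀ a b : k, v (a * b) = v a * v b)
    (hvadd : ∀ a b : k, v (a + b) ≤ max (v a) (v b))
    (hvabs : ∀ c : k, v c = 0 ↔ c = 0)
    (g : TAlgHoms v hv0 (phiR k R)) (a b : R) :
    ofTrop (ghomOf g (a + b)) ≤ max (ofTrop (ghomOf g a)) (ofTrop (ghomOf g b)) := by
  classical
  rcases eq_or_ne a 0 with ha0 | ha0
  · rw [ha0, zero_add]
    exact le_max_right _ _
  rcases eq_or_ne b 0 with hb0 | hb0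
  · rw [hb0, add_zero]
    exact le_max_left _ _
  set p : MonoidAlgebra k R :=
    MonoidAlgebra.single a 1 + MonoidAlgebra.single b 1 + MonoidAlgebra.single (a + b) (-1) with hpdef
  have hp : phiR k R p = 0 := by
    rw [hpdef, map_add, map_add, phiR_single, phiR_single, phiR_single, one_smul,
      one_smul, neg_one_smul]
    exact add_neg_cancel _
  have hsa : a + b ≠ a := fun h => hb0 (by rwa [add_eq_left] at h)
  have hsb : a + b ≠ b := fun h => ha0 (by rwa [add_eq_right] at h)
  have hps : p.coeff (a + b) = -1 := by
    simp only [hpdef, MonoidAlgebra.coeff_add, MonoidAlgebra.coeff_single]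
    rw [Finsupp.add_apply, Finsupp.add_apply,
      Finsupp.single_eq_of_ne' (Ne.symm hsa), Finsupp.single_eq_of_ne' (Ne.symm hsb),
      Finsupp.single_eq_same, zero_add, zero_add]
  have hmem : a + b ∈ p.coeff.support := by
    rw [Finsupp.mem_support_iff, hps]
    exact neg_ne_zero.2 one_ne_zero
  have hkey := bend_ineq hvabs g hp hmem
  rw [hps, v_neg hv1 hvmul, hv1, one_mul] at hkey
  refine hkey.trans (Finset.sup_le ?_)
  intro x hx
  obtain ⟨hxs, hxsupp⟩ := Finset.mem_erase.1 hx
  have hpx : p.coeff x = Finsupp.single a 1 x + Finsupp.single b 1 x := by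
    simp only [hpdef, MonoidAlgebra.coeff_add, MonoidAlgebra.coeff_single]
    rw [Finsupp.add_apply, Finsupp.add_apply,
      Finsupp.single_eq_of_ne' (Ne.symm hxs), add_zero]
  have hvx : v (p.coeff x) ≤ 1 := by
    rw [hpx]
    exact le_trans (hvadd _ _)
      (max_le (v_single_le hv0 hv1 a x) (v_single_le hv0 hv1 b x))
  have hxab : x = a ∨ x = b := by
    by_contra hc
    push_neg at hc
    apply Finsupp.mem_support_iff.1 hxsupp
    rw [hpx, Finsupp.single_eq_of_ne' (Ne.symm hc.1),
      Finsupp.single_eq_of_ne' (Ne.symm hc.2), add_zero]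
  calc v (p.coeff x) * ofTrop (ghomOf g x) ≤ 1 * ofTrop (ghomOf g x) :=
        mul_le_mul_left hvx _
  _ = ofTrop (ghomOf g x) := one_mul _
  _ ≤ max (ofTrop (ghomOf g a)) (ofTrop (ghomOf g b)) := by
      rcases hxab with h | h
      · rw [h]; exact le_max_left _ _
      · rw [h]; exact le_max_right _ _

lemma omega_ext (hv1 : v 1 = 1) (hvmul : ∀ a b : k, v (a * b) = v a * v b)
    (hvabs : ∀ c : k, v c = 0 ↔ c = 0)
    (g : TAlgHoms v hv0 (phiR k R)) (c : k) :
    ofTrop (ghomOf g (algebraMap k R c)) = v c := by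
  classical
  rcases subsingleton_or_nontrivial R with hR | hR
  · exfalso
    have h01 : (0 : R) = 1 := Subsingleton.elim _ _
    have := omega_zero (hv0 := hv0) hv1 hvabs g
    rw [h01, omega_one] at this
    exact one_ne_zero this
  rcases eq_or_ne c 0 with hc0 | hc0
  · rw [hc0, map_zero, omega_zero (hv0 := hv0) hv1 hvabs g, hv0]
  rcases eq_or_ne c 1 with hc1 | hc1
  · rw [hc1, map_one, omega_one, hv1]
  set x : R := algebraMap k R c with hxdef
  have hx1 : x ≠ 1 := fun h => hc1 ((algebraMap k R).injective (by rw [← hxdef, h, map_one]))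
  set p : MonoidAlgebra k R :=
    MonoidAlgebra.single x 1 + MonoidAlgebra.single (1 : R) (-c) with hpdef
  have hp : phiR k R p = 0 := by
    rw [hpdef, map_add, phiR_single, phiR_single, one_smul, neg_smul,
      Algebra.smul_def, mul_one, ← hxdef]
    exact add_neg_cancel _
  have hsupp : p.coeff.support = {x, 1} := by
    rw [hpdef, MonoidAlgebra.coeff_add, MonoidAlgebra.coeff_single, MonoidAlgebra.coeff_single,
      Finsupp.support_add_eq, Finsupp.support_single_ne_zero _ one_ne_zero,
      Finsupp.support_single_ne_zero _ (neg_ne_zero.2 hc0), ← Finset.insert_eq]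
    rw [Finsupp.support_single_ne_zero _ one_ne_zero,
      Finsupp.support_single_ne_zero _ (neg_ne_zero.2 hc0)]
    exact Finset.disjoint_singleton.2 hx1
  have hpx : p.coeff x = 1 := by
    rw [hpdef, MonoidAlgebra.coeff_add, MonoidAlgebra.coeff_single, MonoidAlgebra.coeff_single,
      Finsupp.add_apply, Finsupp.single_eq_same,
      Finsupp.single_eq_of_ne' (Ne.symm hx1), add_zero]
  have hp1 : p.coeff (1 : R) = -c := by
    rw [hpdef, MonoidAlgebra.coeff_add, MonoidAlgebra.coeff_single, MonoidAlgebra.coeff_single,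
      Finsupp.add_apply, Finsupp.single_eq_same,
      Finsupp.single_eq_of_ne' hx1, zero_add]
  have hmemx : x ∈ p.coeff.support := by rw [hsupp]; exact Finset.mem_insert_self _ _
  have hmem1 : (1 : R) ∈ p.coeff.support := by
    rw [hsupp]
    exact Finset.mem_insert_of_mem (Finset.mem_singleton_self _)
  have hkey1 := bend_ineq hvabs g hp hmemx
  have hkey2 := bend_ineq hvabs g hp hmem1
  rw [hsupp, hpx, hv1, one_mul, Finset.erase_insert (Finset.notMem_singleton.2 hx1),
    Finset.sup_singleton, hp1, v_neg hv1 hvmul, omega_one, mul_one] at hkey1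
  rw [hsupp, hp1, v_neg hv1 hvmul, omega_one, mul_one, Finset.pair_comm,
    Finset.erase_insert (Finset.notMem_singleton.2 (Ne.symm hx1)),
    Finset.sup_singleton, hpx, hv1, one_mul] at hkey2
  exact le_antisymm hkey1 hkey2

end AuxOmega

/-- Let `φ̂ : k[R^•] → R` be the canonical surjection from the monoid algebra
of the multiplicative monoid of `R`.  The map sending a nonarchimedean
seminorm `w ∈ X^an` extending `v` to the `𝕋`-algebra homomorphism
`g : Bend^GG_{v,φ̂}(R) → 𝕋` with `g ⟦a⟧ = w a` is well defined and is a
homeomorphism from `X^an` onto the set of `𝕋`-algebra homomorphisms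
`Bend^GG_{v,φ̂}(R) → 𝕋` (both sides with the topology of pointwise
convergence). -/
theorem xan_homeomorph_bend_homs
    (v : k → ℝ≥0) (hv0 : v 0 = 0) (hv1 : v 1 = 1)
    (hvmul : ∀ a b : k, v (a * b) = v a * v b)
    (hvadd : ∀ a b : k, v (a + b) ≤ max (v a) (v b))
    (hvabs : ∀ c : k, v c = 0 ↔ c = 0) :
    ∃ e : XAn v R ≃ₜ
        TAlgHoms v hv0 (MonoidAlgebra.lift k R R (MonoidHom.id R)),
      ∀ (w : XAn v R) (a : R),
        (e w).1 ((bendCon v hv0 (MonoidAlgebra.lift k R R (MonoidHom.id R))).mk'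
            (MonoidAlgebra.of Trop R a)) = toTrop (w.1 a) := by
  classical
  -- the forward map respects the bend congruence
  have hle : ∀ w : XAn v R,
      bendCon v hv0 (phiR k R) ≤ kerRC (evalT (uHom w)) := by
    intro w
    refine RingCon.ringConGen_le.2 ?_
    rintro x y ⟨p, hp, a, ha, rfl, rfl⟩
    exact evalT_bend hv0 hvabs w hp ha
  -- forward map on the quotient
  let Gfun : XAn v R → ((bendCon v hv0 (phiR k R)).Quotient → Trop) := fun w =>
    Quotient.lift (fun q => evalT (uHom w) q) (fun q r h => hle w h)
  have hGmk : ∀ (w : XAn v R) (q : MonoidAlgebra Trop R),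
      Gfun w ((bendCon v hv0 (phiR k R)).mk' q) = evalT (uHom w) q := fun _ _ => rfl
  let F : XAn v R → TAlgHoms v hv0 (phiR k R) := fun w =>
    ⟨Gfun w,
      fun x y => Quotient.inductionOn₂ x y fun p q => map_add (evalT (uHom w)) p q,
      fun x y => Quotient.inductionOn₂ x y fun p q => map_mul (evalT (uHom w)) p q,
      map_zero (evalT (uHom w)),
      map_one (evalT (uHom w)),
      fun t => by
        rw [hGmk]
        show evalT (uHom w) (MonoidAlgebra.single 1 t) = t
        rw [evalT_single, map_one (uHom w), mul_one]⟩
  -- backward map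
  let W : TAlgHoms v hv0 (phiR k R) → XAn v R := fun g =>
    ⟨fun a => ofTrop (ghomOf g a),
      omega_zero hv1 hvabs g, omega_one g, omega_mul g,
      omega_add hv1 hvmul hvadd hvabs g, omega_ext hv1 hvmul hvabs g⟩
  have hWF : ∀ w, W (F w) = w := by
    intro w
    apply Subtype.ext
    funext a
    show ofTrop (Gfun w ((bendCon v hv0 (phiR k R)).mk' (MonoidAlgebra.of Trop R a)))
      = w.1 a
    rw [hGmk]
    show ofTrop (evalT (uHom w) (MonoidAlgebra.single a 1)) = w.1 a
    rw [evalT_single, one_mul]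
    rfl
  have hFW : ∀ g, F (W g) = g := by
    intro g
    apply Subtype.ext
    funext x
    refine Quotient.inductionOn x ?_
    intro q
    have huh : uHom (W g) = ghomOf g := by
      ext a
      rfl
    show evalT (uHom (W g)) q = _
    rw [huh]
    exact (geval g q).symm
  let E : XAn v R ≃ TAlgHoms v hv0 (phiR k R) := ⟨F, W, hWF, hFW⟩
  have hcontF : Continuous F := by
    refine Continuous.subtype_mk ?_ _
    refine continuous_pi ?_
    intro x
    refine Quotient.inductionOn x ?_
    intro q
    show Continuous fun w : XAn v R => evalT (uHom w) q
    induction q using MonoidAlgebra.induction with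
    | zero =>
        have h : (fun w : XAn v R => evalT (uHom w) (0 : MonoidAlgebra Trop R))
            = fun _ => (0 : Trop) := by
          funext w
          exact map_zero _
        rw [h]
        exact continuous_const
    | single_add a b f haf hb ih =>
        have h : (fun w : XAn v R => evalT (uHom w) (MonoidAlgebra.single a b + f))
            = fun w : XAn v R => b * uHom w a + evalT (uHom w) f := by
          funext w
          rw [map_add, evalT_single]
        rw [h]
        have ih' : Continuous fun w : XAn v R => (ofTrop (evalT (uHom w) f) : ℝ≥0) := ih
        have h1 : Continuous fun w : XAn v R => (ofTrop b * w.1 a : ℝ≥0) :=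
          continuous_const.mul ((continuous_apply a).comp continuous_subtype_val)
        have h2 : Continuous fun w : XAn v R =>
            max (ofTrop b * w.1 a) (ofTrop (evalT (uHom w) f)) :=
          continuous_max.comp (h1.prodMk ih')
        exact h2
  have hcontW : Continuous W := by
    refine Continuous.subtype_mk ?_ _
    refine continuous_pi ?_
    intro a
    show Continuous fun g : TAlgHoms v hv0 (phiR k R) =>
      ofTrop (g.1 ((bendCon v hv0 (phiR k R)).mk' (MonoidAlgebra.of Trop R a)))
    exact (continuous_apply _).comp continuous_subtype_val
  refine ⟨⟨E, hcontF, hcontW⟩, ?_⟩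
  intro w a
  show evalT (uHom w) (MonoidAlgebra.single a 1) = toTrop (w.1 a)
  rw [evalT_single]
  exact one_mul _


end
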